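/- The aggregate operator PRODUCT, mapping a nonempty finite multiset of non-negative rationals to the product of its elements, has a bounded descending chain. In particular, the choices s = t = 1/2 and m_i = 2^{i+1} witness this: for every i ∈ ℕ, PRODUCT({{1/2, i·(1/2)}}) > PRODUCT({{1/2, (i+1)·(1/2)}}), and for all j ≥ 1 and all k', k ∈ ℕ with k' ≤ k ≤ i, PRODUCT({{1/2, k'·(1/2)}}) < PRODUCT({{j·2^{i+1}, 1/2, k·(1/2)}}). -/
import Mathlib


open scoped Classical

/-! ## Variables, constants, relation names -/

abbrev Var : Type := ℕ
abbrev RelName : Type := ℕ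

/-- A term: a variable or a constant (a non-negative rational). -/
inductive Trm : Type where
  | var : Var → Trm
  | const : ℚ≥0 → Trm
deriving DecidableEq

/-- An atom `R(x̲, y)`: relation name, primary-key arguments, remaining arguments. -/
structure DBAtom : Type where
  rel : RelName
  keyArgs : List Trm
  nonkeyArgs : List Trm
deriving DecidableEq, Inhabited

/-- A fact: an atom without variables. -/
structure DBFact : Type where
  rel : RelName
  keyArgs : List ℚ≥0
  nonkeyArgs : List ℚ≥0
deriving DecidableEq

def Trm.var? : Trm → Option Var
  | .var v => some v
  | .const _ => none

def Trm.const? : Trm → Option ℚ≥0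
  | .var _ => none
  | .const c => some c

def DBAtom.keyVars (F : DBAtom) : Finset Var := (F.keyArgs.filterMap Trm.var?).toFinset

def DBAtom.allVars (F : DBAtom) : Finset Var :=
  ((F.keyArgs ++ F.nonkeyArgs).filterMap Trm.var?).toFinset

def DBAtom.notkeyVars (F : DBAtom) : Finset Var := F.allVars \ F.keyVars

def qVars (q : List DBAtom) : Finset Var := q.foldr (fun F s => F.allVars ∪ s) ∅

/-- Self-join-free: pairwise distinct relation names. -/
def SelfJoinFree (q : List DBAtom) : Prop := (q.map DBAtom.rel).Nodup

def KeyEqual (f g : DBFact) : Prop := f.rel = g.rel ∧ f.keyArgs = g.keyArgs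

def DBConsistent (s : Finset DBFact) : Prop :=
  ∀ f ∈ s, ∀ g ∈ s, KeyEqual f g → f = g

/-- A repair: an inclusion-maximal consistent subset. -/
def IsRepair (db r : Finset DBFact) : Prop :=
  r ⊆ db ∧ DBConsistent r ∧
    ∀ s : Finset DBFact, r ⊆ s → s ⊆ db → DBConsistent s → s = r

/-! ## Valuations (partial maps from variables to constants) -/

abbrev Assignment : Type := Var → Option ℚ≥0

def Assignment.Dom (θ : Assignment) : Set Var := {v | θ v ≠ none}

def Assignment.ExtendsA (μ θ : Assignment) : Prop :=
  ∀ (v : Var) (c : ℚ≥0), θ v = some c → μ v = some c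

noncomputable def Assignment.restrict (θ : Assignment) (S : Set Var) : Assignment :=
  fun v => if v ∈ S then θ v else none

def emptyAssignment : Assignment := fun _ => none

/-- Combination of two valuations (the first takes precedence). -/
def Assignment.comb (θ μ : Assignment) : Assignment :=
  fun v => (θ v).orElse (fun _ => μ v)

def applyTrm (θ : Assignment) : Trm → Trm
  | .var v => (θ v).elim (Trm.var v) Trm.const
  | .const c => .const c

def applyAtom (θ : Assignment) (F : DBAtom) : DBAtom :=
  ⟨F.rel, F.keyArgs.map (applyTrm θ), F.nonkeyArgs.map (applyTrm θ)⟩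

def applyQ (θ : Assignment) (q : List DBAtom) : List DBAtom := q.map (applyAtom θ)

def DBAtom.toFact? (F : DBAtom) : Option DBFact := do
  let ks ← F.keyArgs.mapM Trm.const?
  let ns ← F.nonkeyArgs.mapM Trm.const?
  pure (DBFact.mk F.rel ks ns)

def AtomIn (s : Finset DBFact) (F : DBAtom) : Prop := ∃ f ∈ s, F.toFact? = some f

/-- `(s, θ) ⊨ q`: θ extends to a valuation over dom(θ) ∪ vars(q) mapping all atoms of q into s. -/
def Entails (s : Finset DBFact) (θ : Assignment) (q : List DBAtom) : Prop :=
  ∃ μ : Assignment, μ.Dom = θ.Dom ∪ ↑(qVars q) ∧ μ.ExtendsA θ ∧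
    ∀ F ∈ q, AtomIn s (applyAtom μ F)

/-! ## Functional dependencies -/

def FDSatT (N : Set (Var → ℚ≥0)) (X Y : Finset Var) : Prop :=
  ∀ t₁ ∈ N, ∀ t₂ ∈ N, (∀ x ∈ X, t₁ x = t₂ x) → ∀ y ∈ Y, t₁ y = t₂ y

/-- Standard logical implication of functional dependencies. -/
def FDImp (fds : Set (Finset Var × Finset Var)) (X Y : Finset Var) : Prop :=
  ∀ N : Set (Var → ℚ≥0), (∀ fd ∈ fds, FDSatT N fd.1 fd.2) → FDSatT N X Y

def FDSet (q : List DBAtom) : Set (Finset Var × Finset Var) :=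
  {p | ∃ F ∈ q, p = (F.keyVars, F.allVars)}

def keycl (F : DBAtom) (q : List DBAtom) : Set Var :=
  {x | x ∈ qVars q ∧ FDImp (FDSet (q.erase F)) F.keyVars {x}}

/-! ## Attacks and the attack graph -/

def AdjIn (q : List DBAtom) (a b : Var) : Prop :=
  ∃ G ∈ q, a ∈ G.allVars ∧ b ∈ G.allVars

/-- Atom F attacks variable x in q. -/
def AttacksVar (q : List DBAtom) (F : DBAtom) (x : Var) : Prop :=
  ∃ l : List Var, (∀ v ∈ l, v ∉ keycl F q) ∧
    (∃ h, l.head? = some h ∧ h ∈ F.notkeyVars) ∧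
    l.getLast? = some x ∧ l.Chain' (AdjIn q)

def AttacksAtom (q : List DBAtom) (F G : DBAtom) : Prop :=
  ∃ x ∈ G.allVars, AttacksVar q F x

def Unattacked (q : List DBAtom) (v : Var) : Prop := ∀ F ∈ q, ¬ AttacksVar q F v

/-- The list order of q is a topological sort of its (hence acyclic) attack graph. -/
def IsTopoSort (q : List DBAtom) : Prop :=
  ∀ i j : Fin q.length, q.get i ≠ q.get j →
    AttacksAtom q (q.get i) (q.get j) → (i : ℕ) < (j : ℕ)

/-! ## Embeddings and ∀embeddings (relative to the list order as topological sort) -/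

def uVars (q : List DBAtom) (ℓ : ℕ) : Finset Var := qVars (q.take ℓ)

def headKey : List DBAtom → Finset Var
  | [] => ∅
  | F :: _ => F.keyVars

/-- ℓ-embedding of q in db. -/
def IsLEmb (q : List DBAtom) (db : Finset DBFact) (ℓ : ℕ) (θ : Assignment) : Prop :=
  θ.Dom = ↑(uVars q ℓ) ∧ Entails db θ q

/-- ℓ-∀embedding of q in db. -/
def IsForallEmb (q : List DBAtom) (db : Finset DBFact) : ℕ → Assignment → Prop
  | 0, θ => IsLEmb q db 0 θ ∧ ∀ r, IsRepair db r → Entails r emptyAssignment q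
  | (ℓ + 1), θ =>
      IsLEmb q db (ℓ + 1) θ ∧
      (∀ r, IsRepair db r →
        Entails r (θ.restrict (↑(uVars q ℓ) ∪ ↑(headKey (q.drop ℓ)))) (q.drop ℓ)) ∧
      IsForallEmb q db ℓ (θ.restrict ↑(uVars q ℓ))

/-- An embedding of q in s: a valuation over vars(q) mapping all atoms of q into s. -/
def IsEmbedding (q : List DBAtom) (s : Finset DBFact) (θ : Assignment) : Prop :=
  θ.Dom = ↑(qVars q) ∧ ∀ F ∈ q, AtomIn s (applyAtom θ F)

/-- Superfrugal repair: every embedding of q in r is a ∀embedding of q in db. -/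
def Superfrugal (q : List DBAtom) (db r : Finset DBFact) : Prop :=
  IsRepair db r ∧ ∀ θ, IsEmbedding q r θ → IsForallEmb q db q.length θ

/-! ## FD satisfaction by sets of valuations; maximal consistent subsets (MCS) -/

def AgreeOn (θ₁ θ₂ : Assignment) (X : Finset Var) : Prop := ∀ x ∈ X, θ₁ x = θ₂ x

def SatFD (N : Set Assignment) (X Y : Finset Var) : Prop :=
  ∀ θ₁ ∈ N, ∀ θ₂ ∈ N, AgreeOn θ₁ θ₂ X → AgreeOn θ₁ θ₂ Y

def SatFDs (N : Set Assignment) (q : List DBAtom) : Prop :=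
  ∀ fd ∈ FDSet q, SatFD N fd.1 fd.2

/-- Maximal consistent subset of a set M of embeddings. -/
def IsMCS (q : List DBAtom) (M N : Set Assignment) : Prop :=
  N ⊆ M ∧ SatFDs N q ∧ ∀ N', N ⊆ N' → N' ⊆ M → SatFDs N' q → N' = N

/-! ## Aggregate operators -/

structure AggOp : Type where
  app : Multiset ℚ≥0 → ℚ
  nonneg : ∀ X : Multiset ℚ≥0, X ≠ 0 → 0 ≤ app X

noncomputable def AggOp.appNN (A : AggOp) (X : Multiset ℚ≥0) : ℚ≥0 := (A.app X).toNNRat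

def AggOp.Assoc (A : AggOp) : Prop :=
  ∀ X Y : Multiset ℚ≥0, X ≠ 0 → A.app (X + Y) = A.app (A.appNN X ::ₘ Y)

def AggOp.Mono (A : AggOp) : Prop :=
  ∀ x x' : List ℚ≥0, x ≠ [] → List.Forall₂ (· ≤ ·) x x' →
    ∀ Y : Multiset ℚ≥0, A.app ↑x ≤ A.app (↑x' + Y)

def evalTrm (θ : Assignment) : Trm → ℚ≥0
  | .var v => (θ v).getD 0
  | .const c => c

/-- The multiset of r-values over a (finite) set of valuations. -/
noncomputable def valsOf (N : Set Assignment) (r : Trm) : Multiset ℚ≥0 :=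
  if h : N.Finite then h.toFinset.val.map (fun θ => evalTrm θ r) else 0

/-- Primitive numerical term: a (numerical) variable of the query, or a constant. -/
def PrimTerm (q : List DBAtom) (r : Trm) : Prop :=
  (∃ v, r = Trm.var v ∧ v ∈ qVars q) ∨ (∃ c, r = Trm.const c)

/-! ## Branches and ∀key-embeddings -/

/-- γ is a branch of the ℓ-∀embedding θ. -/
def IsBranch (q : List DBAtom) (db : Finset DBFact) (ℓ : ℕ) (θ γ : Assignment) : Prop :=
  γ.ExtendsA θ ∧
  (∀ v ∈ γ.Dom \ θ.Dom, Unattacked (applyQ θ (q.drop ℓ)) v) ∧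
  (∃ μ, IsForallEmb q db q.length μ ∧ μ.ExtendsA γ)

/-- γ is an (ℓ+1)-∀key-embedding: a branch of θ with domain dom(θ) ∪ key(F_{ℓ+1}). -/
def IsKeyEmb (q : List DBAtom) (db : Finset DBFact) (ℓ : ℕ) (θ γ : Assignment) : Prop :=
  IsBranch q db ℓ θ γ ∧ γ.Dom = θ.Dom ∪ ↑(headKey (q.drop ℓ))

/-- M(θ): all ∀embeddings of q in db extending θ. -/
def Mset (q : List DBAtom) (db : Finset DBFact) (θ : Assignment) : Set Assignment :=
  {μ | IsForallEmb q db q.length μ ∧ μ.ExtendsA θ}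

/-! ## Weakly connected components of the attack graph -/

def UndirectedEdge (p : List DBAtom) (F G : DBAtom) : Prop :=
  F ∈ p ∧ G ∈ p ∧ (AttacksAtom p F G ∨ AttacksAtom p G F)

/-- S is a maximal weakly connected component of the attack graph of p. -/
def IsWCC (p : List DBAtom) (S : Set DBAtom) : Prop :=
  ∃ F₀ ∈ p, S = {G | Relation.ReflTransGen (UndirectedEdge p) F₀ G}

/-! ## rifi, sequential proofs, n-minimality -/

/-- rifi(q, s, V): valuations over V extending to a valuation over vars(q) mapping q into s. -/
def rifi (q : List DBAtom) (s : Finset DBFact) (V : Finset Var) : Set Assignment :=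
  {θ | θ.Dom = ↑V ∧ ∃ μ : Assignment, μ.Dom = ↑(qVars q) ∧ μ.ExtendsA θ ∧
      ∀ F ∈ q, AtomIn s (applyAtom μ F)}

/-- A sequential proof of FD(p) ⊨ Z → w. -/
def IsSeqProof (p : List DBAtom) (Z : Finset Var) (w : Var) (l : List DBAtom) : Prop :=
  (∀ F ∈ l, F ∈ p) ∧
  (∀ i : Fin l.length, (l.get i).keyVars ⊆ Z ∪ qVars (l.take i.1)) ∧
  w ∈ Z ∪ qVars l

/-- n-minimal repair (with X = vars(q)). -/
def NMinimal (q : List DBAtom) (db r : Finset DBFact) : Prop :=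
  IsRepair db r ∧
  ¬ ∃ s : Finset DBFact, IsRepair db s ∧
      (∀ θ, IsEmbedding q s θ → IsEmbedding q r θ) ∧
      (∃ μ, IsEmbedding q r μ ∧ ¬ IsEmbedding q s μ)

/-! ## Descending chains for aggregate operators -/

def DescChain {α β : Type*} [LT β] (F : Multiset α → β) (s t : α) : Prop :=
  ∀ i : ℕ, F (s ::ₘ Multiset.replicate (i + 1) t) < F (s ::ₘ Multiset.replicate i t)

def BoundedBy {α β : Type*} [LT β] (F : Multiset α → β) (s t : α) (m : ℕ → α) : Prop :=
  ∀ i j : ℕ, 1 ≤ j → ∀ k' k : ℕ, k' ≤ k → k ≤ i →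
    F (s ::ₘ Multiset.replicate k' t) <
      F (Multiset.replicate j (m i) + (s ::ₘ Multiset.replicate k t))

def HasBoundedDescChain {α β : Type*} [LT β] (F : Multiset α → β) : Prop :=
  ∃ s t, DescChain F s t ∧ ∃ m : ℕ → α, BoundedBy F s t m

/-- PRODUCT: product of a finite multiset of non-negative rationals. -/
def prodOp (X : Multiset ℚ≥0) : ℚ≥0 := X.prod


lemma prodOp_cons_rep (n : ℕ) :
    prodOp ((1/2 : ℚ≥0) ::ₘ Multiset.replicate n (1/2)) = (1/2 : ℚ≥0) ^ (n + 1) := by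
  simp [prodOp, Multiset.prod_replicate, pow_succ, mul_comm]

lemma half_lt_one' : (1/2:ℚ≥0) < 1 := by
  rw [div_lt_one] <;> norm_num

lemma desc : DescChain prodOp (1/2 : ℚ≥0) (1/2) := by
  intro i
  rw [prodOp_cons_rep, prodOp_cons_rep]
  exact pow_lt_pow_right_of_lt_one₀ (by norm_num) half_lt_one' (by omega)

lemma bdd : BoundedBy prodOp (1/2 : ℚ≥0) (1/2) (fun i => (2 : ℚ≥0) ^ (i + 1)) := by
  intro i j hj k' k hk' hk
  rw [prodOp_cons_rep]
  have hlhs : (1/2 : ℚ≥0) ^ (k' + 1) < 1 :=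
    pow_lt_one₀ (by norm_num) half_lt_one' (by omega)
  refine hlhs.trans_le ?_
  simp only [prodOp, Multiset.prod_add, Multiset.prod_replicate]
  have hc : ((1/2:ℚ≥0) ::ₘ Multiset.replicate k (1/2)).prod = (1/2)^(k+1) := prodOp_cons_rep k
  rw [hc]
  have h2 : ((2 : ℚ≥0) ^ (i + 1)) ^ j ≥ 2 ^ (i + 1) := by
    calc (2 : ℚ≥0) ^ (i + 1) = ((2:ℚ≥0) ^ (i+1)) ^ 1 := (pow_one _).symm
    _ ≤ ((2:ℚ≥0) ^ (i+1)) ^ j := pow_le_pow_right₀ (one_le_pow₀ (by norm_num)) hj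
  have key : (1:ℚ≥0) ≤ 2 ^ (i + 1) * (1/2) ^ (k + 1) := by
    rw [div_pow, one_pow, mul_one_div, one_le_div (by positivity)]
    exact pow_le_pow_right₀ (by norm_num) (by omega)
  calc (1:ℚ≥0) ≤ 2 ^ (i+1) * (1/2)^(k+1) := key
  _ ≤ ((2:ℚ≥0)^(i+1))^j * (1/2)^(k+1) := by gcongr

/-- PRODUCT has a bounded descending chain, witnessed by
s = t = 1/2 and m_i = 2^(i+1). -/
theorem stmt16 :
    HasBoundedDescChain prodOp ∧
    DescChain prodOp (1/2) (1/2) ∧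
    BoundedBy prodOp (1/2) (1/2) (fun i => (2 : ℚ≥0) ^ (i + 1)) := by
  refine ⟨⟨1/2, 1/2, desc, ⟨fun i => (2 : ℚ≥0) ^ (i + 1), bdd⟩⟩, desc, bdd⟩
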